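/- arXiv:1911.06129 — 2 statements merged into one kernel-verified Lean document; each statement's English description precedes it below -/
import Mathlib

section
/- If there exists a finite constant c such that p(x)/q(x) ≤ c for all x (densities of P and Q), then there exists α < ∞ (depending only on c) such that D_K(P‖Q) ≤ α·Δ_H(P,Q), where Δ_H is the squared Hellinger distance. -/
/-!
Pointwise, `u log (u / v) - (u - v) ≤ (2 √c + 1) (√u - √v)²` whenever `0 ≤ u ≤ c v`: bounding
`log (u / v) = 2 log (√u / √v)` by `2 (√u / √v - 1)` leaves exactly `(√u - √v)² (2 √u / √v + 1)`,
and `√u / √v ≤ √c`.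
Integrating, the term `u - v` disappears because both densities have mass one.
-/

open MeasureTheory Real

lemma Real.log_le_two_mul_sqrt_sub_one {x : ℝ} (hx : 0 < x) : log x ≤ 2 * (√x - 1) := by
  have h := log_le_sub_one_of_pos (sqrt_pos.2 hx)
  rw [log_sqrt hx.le] at h
  linarith

lemma mul_log_div_sub_sub_le_mul_sq_sqrt_sub_sqrt {a b c : ℝ} (ha : 0 ≤ a) (hb : 0 ≤ b)
    (hab : a ≤ c * b) : a * log (a / b) - (a - b) ≤ (2 * √c + 1) * (√a - √b) ^ 2 := by
  rcases hb.eq_or_lt with rfl | hb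
  · obtain rfl : a = 0 := le_antisymm (by simpa using hab) ha
    simp
  rcases ha.eq_or_lt with rfl | ha
  · simp only [zero_mul, zero_sub, sub_neg_eq_add, zero_add, sqrt_zero, sq_sqrt hb.le, even_two,
      Even.neg_pow]
    nlinarith [sqrt_nonneg c]
  set s := √a
  set t := √b
  have ht : 0 < t := sqrt_pos.2 hb
  have hratio : s / t ≤ √c := by
    rw [← sqrt_div' _ hb.le]
    exact sqrt_le_sqrt ((div_le_iff₀ hb).2 hab)
  have hlog : log (a / b) ≤ 2 * (s / t - 1) := by
    simpa only [sqrt_div' _ hb.le] using log_le_two_mul_sqrt_sub_one (div_pos ha hb)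
  calc a * log (a / b) - (a - b) ≤ a * (2 * (s / t - 1)) - (a - b) := by gcongr
    _ = (s - t) ^ 2 * (2 * (s / t) + 1) := by
      rw [← sq_sqrt ha.le, ← sq_sqrt hb.le]
      field_simp
      ring
    _ ≤ (s - t) ^ 2 * (2 * √c + 1) := by gcongr
    _ = (2 * √c + 1) * (s - t) ^ 2 := mul_comm _ _

lemma sq_sqrt_sub_sqrt_le_abs_add_abs (u v : ℝ) : (√u - √v) ^ 2 ≤ |u| + |v| := by
  have hu : √u ^ 2 ≤ |u| := by rw [sq_sqrt']; exact max_le (le_abs_self u) (abs_nonneg u)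
  have hv : √v ^ 2 ≤ |v| := by rw [sq_sqrt']; exact max_le (le_abs_self v) (abs_nonneg v)
  nlinarith [mul_nonneg (sqrt_nonneg u) (sqrt_nonneg v)]

lemma MeasureTheory.Integrable.sq_sqrt_sub_sqrt {X : Type*} [MeasurableSpace X] {μ : Measure X}
    {p q : X → ℝ} (hp : Integrable p μ) (hq : Integrable q μ) :
    Integrable (fun x ↦ (√(p x) - √(q x)) ^ 2) μ := by
  refine (hp.abs.add hq.abs).mono' ?_ (ae_of_all _ fun x ↦ ?_)
  · exact ((continuous_sqrt.comp_aestronglyMeasurable hp.1).sub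
      (continuous_sqrt.comp_aestronglyMeasurable hq.1)).pow 2
  · rw [norm_of_nonneg (sq_nonneg _)]
    exact sq_sqrt_sub_sqrt_le_abs_add_abs (p x) (q x)

/-- if p(x)/q(x) ≤ c for all x, then there is α < ∞ (depending only on c)
with D_K(P‖Q) ≤ α · Δ_H(P,Q). -/
theorem kl_le_const_mul_sq_hellinger_of_density_ratio_bounded
    (c : ℝ) :
    ∃ α : ℝ, ∀ {X : Type} [MeasurableSpace X] (ν : Measure X) (p q : X → ℝ),
      Measurable p → Measurable q →
      (∀ x, 0 ≤ p x) → (∀ x, 0 ≤ q x) →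
      (∫ x, p x ∂ν) = 1 → (∫ x, q x ∂ν) = 1 →
      Integrable p ν → Integrable q ν →
      Integrable (fun x => p x * Real.log (p x / q x)) ν →
      (∀ x, p x ≤ c * q x) →
      ∫ x, p x * Real.log (p x / q x) ∂ν
        ≤ α * ∫ x, (Real.sqrt (p x) - Real.sqrt (q x)) ^ 2 ∂ν := by
  refine ⟨2 * √c + 1, fun ν p q _ _ hp0 hq0 hP hQ hp hq hkl hpq ↦ ?_⟩
  have hdiff : Integrable (fun x ↦ p x - q x) ν := hp.sub hq
  calc ∫ x, p x * log (p x / q x) ∂ν = ∫ x, (p x * log (p x / q x) - (p x - q x)) ∂ν := by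
        rw [integral_sub hkl hdiff, integral_sub hp hq, hP, hQ, sub_self, sub_zero]
    _ ≤ ∫ x, (2 * √c + 1) * (√(p x) - √(q x)) ^ 2 ∂ν :=
        integral_mono (hkl.sub hdiff) ((hp.sq_sqrt_sub_sqrt hq).const_mul _) fun x ↦
          mul_log_div_sub_sub_le_mul_sq_sqrt_sub_sqrt (hp0 x) (hq0 x) (hpq x)
    _ = (2 * √c + 1) * ∫ x, (√(p x) - √(q x)) ^ 2 ∂ν := integral_const_mul _ _
end

section
/- Upper bound half of the dimension limit: if dim_{P_Π}(π*) exists, then limsup_{ε→0} (−log E_Π[e^{−(Δ_H^{1/2}(π,π*)/ε)²}]) / (2 log(1/ε)) ≤ dim_{P_Π}(π*)/2, which follows from the bound −log E_Π[e^{−(Δ_H^{1/2}(π,π*)/ε)²}] ≤ −log P_Π(B_ε(π*)) + 1. -/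
/-!
On the closed ball `closedBall c ε` the kernel `exp (-(dist x c / ε) ^ 2)` is at least `exp (-1)`,
so its mean dominates `exp (-1) * μ.real (closedBall c ε)`, i.e.
`-log (∫ ...) ≤ 1 - log (μ.real (closedBall c ε))`. Dividing by `2 * log (1 / ε) → ∞` gives
the bound `d / 2` up to the vanishing term `1 / (2 * log (1 / ε))`.

If some ball around `c` is null, the junk value `log 0 = 0` makes the hypothesis force `d = 0`;
the mean is then at most `exp (-(r / ε) ^ 2)`, the quotient tends to `+∞`, and a real `limsup`
of a function unbounded above is `0` by convention.
-/

open MeasureTheory Real Filter Metric Topology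

section GaussianKernel

variable {X : Type*} [PseudoMetricSpace X] [MeasurableSpace X] {μ : Measure X}

lemma integrable_exp_neg_dist_div_sq [OpensMeasurableSpace X] [IsFiniteMeasure μ]
    (c : X) (ε : ℝ) : Integrable (fun x => exp (-(dist x c / ε) ^ 2)) μ := by
  refine Integrable.mono' (integrable_const 1) (by fun_prop) (Eventually.of_forall fun x => ?_)
  rw [norm_of_nonneg (exp_pos _).le, exp_le_one_iff, neg_nonpos]
  positivity

lemma integral_exp_neg_dist_div_sq_le_one [IsProbabilityMeasure μ] (c : X) (ε : ℝ) :
    ∫ x, exp (-(dist x c / ε) ^ 2) ∂μ ≤ 1 := by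
  refine (integral_mono_of_nonneg (Eventually.of_forall fun x => (exp_pos _).le)
    (integrable_const 1) (Eventually.of_forall fun x => ?_)).trans_eq (by simp)
  rw [exp_le_one_iff, neg_nonpos]
  positivity

lemma exp_neg_one_mul_measureReal_closedBall_le_integral [OpensMeasurableSpace X]
    [IsFiniteMeasure μ] (c : X) (ε : ℝ) :
    exp (-1) * μ.real (closedBall c ε) ≤ ∫ x, exp (-(dist x c / ε) ^ 2) ∂μ := by
  have hint := integrable_exp_neg_dist_div_sq (μ := μ) c ε
  have hball : ∀ x ∈ closedBall c ε, exp (-1) ≤ exp (-(dist x c / ε) ^ 2) := fun (x : X) hx => by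
    have hdist : dist x c ≤ ε := hx
    have hε : 0 ≤ ε := dist_nonneg.trans hdist
    have hsq : (dist x c / ε) ^ 2 ≤ 1 := pow_le_one₀ (by positivity) (div_le_one_of_le₀ hdist hε)
    exact exp_le_exp.2 (by linarith)
  calc exp (-1) * μ.real (closedBall c ε)
      = ∫ _ in closedBall c ε, exp (-1) ∂μ := by rw [setIntegral_const, smul_eq_mul, mul_comm]
    _ ≤ ∫ x in closedBall c ε, exp (-(dist x c / ε) ^ 2) ∂μ :=
      setIntegral_mono_on (integrable_const _).integrableOn hint.integrableOn
        measurableSet_closedBall hball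
    _ ≤ ∫ x, exp (-(dist x c / ε) ^ 2) ∂μ :=
      setIntegral_le_integral hint (Eventually.of_forall fun _ => (exp_pos _).le)

lemma neg_log_integral_exp_neg_dist_div_sq_le [OpensMeasurableSpace X] [IsFiniteMeasure μ]
    [NeZero μ] {c : X} {ε : ℝ} (hball : μ (closedBall c ε) ≠ 0) :
    -log (∫ x, exp (-(dist x c / ε) ^ 2) ∂μ) ≤ 1 - log (μ.real (closedBall c ε)) := by
  have hP : 0 < μ.real (closedBall c ε) := ENNReal.toReal_pos hball (measure_ne_top _ _)
  have hlog := log_le_log (by positivity) (exp_neg_one_mul_measureReal_closedBall_le_integral c ε)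
  rw [log_mul (exp_pos _).ne' hP.ne', log_exp] at hlog
  linarith

lemma integral_exp_neg_dist_div_sq_le_of_measure_closedBall_eq_zero [OpensMeasurableSpace X]
    [IsProbabilityMeasure μ] {c : X} {r : ℝ} (hr : 0 ≤ r) (hnull : μ (closedBall c r) = 0) (ε : ℝ) :
    ∫ x, exp (-(dist x c / ε) ^ 2) ∂μ ≤ exp (-(r / ε) ^ 2) := by
  have hfar : ∀ᵐ x ∂μ, r < dist x c := by
    filter_upwards [measure_eq_zero_iff_ae_notMem.1 hnull] with x hx
    simpa using hx
  refine (integral_mono_ae (integrable_exp_neg_dist_div_sq c ε)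
    (integrable_const (exp (-(r / ε) ^ 2))) ?_).trans_eq (by simp)
  filter_upwards [hfar] with x hx
  rw [div_pow, div_pow]
  gcongr

end GaussianKernel

lemma tendsto_log_one_div_nhdsGT_zero : Tendsto (fun ε : ℝ => log (1 / ε)) (𝓝[>] 0) atTop := by
  simp only [one_div]
  exact tendsto_log_atTop.comp tendsto_inv_nhdsGT_zero

section SmallScale

variable {X : Type*} [PseudoMetricSpace X] [MeasurableSpace X] [OpensMeasurableSpace X]
  {μ : Measure X} [IsProbabilityMeasure μ] {c : X}

theorem limsup_neg_log_integral_exp_neg_dist_div_sq_le_of_measure_closedBall_ne_zero {d : ℝ}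
    (hball : ∀ ε > 0, μ (closedBall c ε) ≠ 0)
    (hdim : Tendsto (fun ε : ℝ => -log (μ.real (closedBall c ε)) / log (1 / ε)) (𝓝[>] 0) (𝓝 d)) :
    limsup (fun ε : ℝ => -log (∫ x, exp (-(dist x c / ε) ^ 2) ∂μ) / (2 * log (1 / ε)))
      (𝓝[>] 0) ≤ d / 2 := by
  have hsmall : ∀ᶠ ε : ℝ in 𝓝[>] 0, 0 < log (1 / ε) ∧ 0 < ε :=
    (tendsto_log_one_div_nhdsGT_zero.eventually_gt_atTop 0).and self_mem_nhdsWithin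
  have hbound : Tendsto (fun ε : ℝ => (1 - log (μ.real (closedBall c ε))) / (2 * log (1 / ε)))
      (𝓝[>] 0) (𝓝 (d / 2)) := by
    have hlim := (tendsto_log_one_div_nhdsGT_zero.inv_tendsto_atTop.add hdim).div_const 2
    rw [zero_add] at hlim
    refine hlim.congr' ?_
    filter_upwards [hsmall] with ε hε
    simp only [Pi.inv_apply]
    field_simp
    ring
  have hle : ∀ᶠ ε : ℝ in 𝓝[>] 0, -log (∫ x, exp (-(dist x c / ε) ^ 2) ∂μ) / (2 * log (1 / ε))
      ≤ (1 - log (μ.real (closedBall c ε))) / (2 * log (1 / ε)) := by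
    filter_upwards [hsmall] with ε hε
    exact div_le_div_of_nonneg_right (neg_log_integral_exp_neg_dist_div_sq_le (hball ε hε.2))
      (by linarith [hε.1])
  have hnonneg : ∀ᶠ ε : ℝ in 𝓝[>] 0,
      0 ≤ -log (∫ x, exp (-(dist x c / ε) ^ 2) ∂μ) / (2 * log (1 / ε)) := by
    filter_upwards [hsmall] with ε hε
    have hpos := integral_exp_pos (μ := μ) (integrable_exp_neg_dist_div_sq c ε)
    have hlog := log_nonpos hpos.le (integral_exp_neg_dist_div_sq_le_one c ε)
    exact div_nonneg (neg_nonneg.2 hlog) (by linarith [hε.1])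
  calc _ ≤ limsup (fun ε : ℝ => (1 - log (μ.real (closedBall c ε))) / (2 * log (1 / ε)))
        (𝓝[>] 0) :=
      limsup_le_limsup hle (isBoundedUnder_of_eventually_ge hnonneg).isCoboundedUnder_flip
        hbound.isBoundedUnder_le
    _ = d / 2 := hbound.limsup_eq

theorem tendsto_neg_log_integral_exp_neg_dist_div_sq_atTop_of_measure_closedBall_eq_zero
    {r : ℝ} (hr : 0 < r) (hnull : μ (closedBall c r) = 0) :
    Tendsto (fun ε : ℝ => -log (∫ x, exp (-(dist x c / ε) ^ 2) ∂μ) / (2 * log (1 / ε)))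
      (𝓝[>] 0) atTop := by
  refine tendsto_atTop_mono' _ ?_ (tendsto_inv_nhdsGT_zero.const_mul_atTop (by positivity :
    0 < r ^ 2 / 2))
  filter_upwards [tendsto_log_one_div_nhdsGT_zero.eventually_gt_atTop 0, self_mem_nhdsWithin]
    with ε hlog (hε : 0 < ε)
  have hpos := integral_exp_pos (μ := μ) (integrable_exp_neg_dist_div_sq c ε)
  have hexp : (r / ε) ^ 2 ≤ -log (∫ x, exp (-(dist x c / ε) ^ 2) ∂μ) := by
    have := log_le_log hpos
      (integral_exp_neg_dist_div_sq_le_of_measure_closedBall_eq_zero hr.le hnull ε)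
    rw [log_exp] at this
    linarith
  calc r ^ 2 / 2 * ε⁻¹ = (r / ε) ^ 2 / (2 * (1 / ε)) := by field_simp
    _ ≤ (r / ε) ^ 2 / (2 * log (1 / ε)) := by gcongr; exact log_le_self (by positivity)
    _ ≤ _ := by gcongr

end SmallScale

/-- upper bound half of the dimension limit: if the local metric dimension
dim_{P_Π}(π*) exists (balls in the Hellinger metric, Δ_H^{1/2} = dist), then
limsup_{ε→0⁺} (−log E_Π[e^{−(dist(π,π*)/ε)²}]) / (2 log(1/ε)) ≤ dim_{P_Π}(π*)/2. -/
theorem limsup_neg_log_exp_le_half_dim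
    {Pi : Type*} [MetricSpace Pi] [MeasurableSpace Pi] [BorelSpace Pi]
    (PPi : Measure Pi) [IsProbabilityMeasure PPi]
    (prs : Pi) (d : ℝ)
    (hdim : Tendsto
      (fun ε : ℝ => -Real.log (PPi (Metric.closedBall prs ε)).toReal / Real.log (1 / ε))
      (nhdsWithin 0 (Set.Ioi 0)) (nhds d)) :
    Filter.limsup
      (fun ε : ℝ =>
        -Real.log (∫ pr, Real.exp (-(dist pr prs / ε) ^ 2) ∂PPi) /
          (2 * Real.log (1 / ε)))
      (nhdsWithin 0 (Set.Ioi 0)) ≤ d / 2 := by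
  by_cases hball : ∀ ε > 0, PPi (closedBall prs ε) ≠ 0
  · exact limsup_neg_log_integral_exp_neg_dist_div_sq_le_of_measure_closedBall_ne_zero hball hdim
  push Not at hball
  obtain ⟨r, hr, hnull⟩ := hball
  have hd : d = 0 := by
    refine tendsto_nhds_unique hdim (tendsto_const_nhds.congr' ?_)
    filter_upwards [Ioo_mem_nhdsGT hr] with ε hε
    simp [measure_mono_null (closedBall_subset_closedBall hε.2.le) hnull]
  rw [hd, zero_div, Real.limsup_of_not_isBoundedUnder (not_isBoundedUnder_of_tendsto_atTop
    (tendsto_neg_log_integral_exp_neg_dist_div_sq_atTop_of_measure_closedBall_eq_zero hr hnull))]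
end
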